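/- If a topological space X can be written as a union of fewer than 𝔟 many Menger subspaces, then X has property E*_ω: for every sequence of countable open covers (U_n) there exist finite V_n ⊆ U_n such that {⋃V_n : n ∈ ω} covers X. -/
import Mathlib


open Set Filter Topology

/-- `𝒰` is an open cover of the space `X`. -/
def IsOpenCover {X : Type} [TopologicalSpace X] (𝒰 : Set (Set X)) : Prop :=
  (∀ u ∈ 𝒰, IsOpen u) ∧ ⋃₀ 𝒰 = Set.univ

/-- The star of a set `A` with respect to a collection `𝒰`. -/
def st {X : Type} (A : Set X) (𝒰 : Set (Set X)) : Set X :=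
  ⋃₀ {u ∈ 𝒰 | (u ∩ A).Nonempty}
/-- Eventual domination `f ≤* g`. -/
def EvLE (f g : ℕ → ℕ) : Prop := ∀ᶠ n in Filter.atTop, f n ≤ g n

/-- The dominating number `𝔡`. -/
noncomputable def dominatingNumber : Cardinal :=
  sInf {c | ∃ D : Set (ℕ → ℕ),
    (∀ g : ℕ → ℕ, ∃ f ∈ D, EvLE g f) ∧ Cardinal.mk D = c}

/-- The bounding number `𝔟`. -/
noncomputable def boundingNumber : Cardinal :=
  sInf {c | ∃ B : Set (ℕ → ℕ),
    (¬ ∃ g : ℕ → ℕ, ∀ f ∈ B, EvLE f g) ∧ Cardinal.mk B = c}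
/-- The Menger property `S_fin(𝒪,𝒪)`. -/
def MengerSpace (X : Type) [TopologicalSpace X] : Prop :=
  ∀ 𝒰 : ℕ → Set (Set X), (∀ n, IsOpenCover (𝒰 n)) →
    ∃ 𝒱 : ℕ → Set (Set X), (∀ n, (𝒱 n).Finite ∧ 𝒱 n ⊆ 𝒰 n) ∧
      ∀ x : X, ∃ n, x ∈ ⋃₀ 𝒱 n

/-- The Hurewicz property. -/
def HurewiczSpace (X : Type) [TopologicalSpace X] : Prop :=
  ∀ 𝒰 : ℕ → Set (Set X), (∀ n, IsOpenCover (𝒰 n)) →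
    ∃ 𝒱 : ℕ → Set (Set X), (∀ n, (𝒱 n).Finite ∧ 𝒱 n ⊆ 𝒰 n) ∧
      ∀ x : X, ∀ᶠ n in Filter.atTop, x ∈ ⋃₀ 𝒱 n

/-- The star-Menger property. -/
def StarMengerSpace (X : Type) [TopologicalSpace X] : Prop :=
  ∀ 𝒰 : ℕ → Set (Set X), (∀ n, IsOpenCover (𝒰 n)) →
    ∃ 𝒱 : ℕ → Set (Set X), (∀ n, (𝒱 n).Finite ∧ 𝒱 n ⊆ 𝒰 n) ∧
      ∀ x : X, ∃ n, x ∈ st (⋃₀ 𝒱 n) (𝒰 n)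

/-- The star-Hurewicz property. -/
def StarHurewiczSpace (X : Type) [TopologicalSpace X] : Prop :=
  ∀ 𝒰 : ℕ → Set (Set X), (∀ n, IsOpenCover (𝒰 n)) →
    ∃ 𝒱 : ℕ → Set (Set X), (∀ n, (𝒱 n).Finite ∧ 𝒱 n ⊆ 𝒰 n) ∧
      ∀ x : X, ∀ᶠ n in Filter.atTop, x ∈ st (⋃₀ 𝒱 n) (𝒰 n)

/-- The strongly star-Menger property. -/
def StronglyStarMengerSpace (X : Type) [TopologicalSpace X] : Prop :=
  ∀ 𝒰 : ℕ → Set (Set X), (∀ n, IsOpenCover (𝒰 n)) →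
    ∃ F : ℕ → Set X, (∀ n, (F n).Finite) ∧
      ∀ x : X, ∃ n, x ∈ st (F n) (𝒰 n)

/-- The strongly star-Hurewicz property. -/
def StronglyStarHurewiczSpace (X : Type) [TopologicalSpace X] : Prop :=
  ∀ 𝒰 : ℕ → Set (Set X), (∀ n, IsOpenCover (𝒰 n)) →
    ∃ F : ℕ → Set X, (∀ n, (F n).Finite) ∧
      ∀ x : X, ∀ᶠ n in Filter.atTop, x ∈ st (F n) (𝒰 n)

/-- The star-Lindelöf property. -/
def StarLindelofSpace (X : Type) [TopologicalSpace X] : Prop :=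
  ∀ 𝒰 : Set (Set X), IsOpenCover 𝒰 →
    ∃ 𝒱 ⊆ 𝒰, 𝒱.Countable ∧ st (⋃₀ 𝒱) 𝒰 = Set.univ

/-- The strongly star-Lindelöf property. -/
def StronglyStarLindelofSpace (X : Type) [TopologicalSpace X] : Prop :=
  ∀ 𝒰 : Set (Set X), IsOpenCover 𝒰 →
    ∃ C : Set X, C.Countable ∧ st C 𝒰 = Set.univ

/-- Property `E*_ω` (countably Menger). -/
def EStarOmega (X : Type) [TopologicalSpace X] : Prop :=
  ∀ 𝒰 : ℕ → Set (Set X), (∀ n, IsOpenCover (𝒰 n) ∧ (𝒰 n).Countable) →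
    ∃ 𝒱 : ℕ → Set (Set X), (∀ n, (𝒱 n).Finite ∧ 𝒱 n ⊆ 𝒰 n) ∧
      ∀ x : X, ∃ n, x ∈ ⋃₀ 𝒱 n

/-- Property `E**_ω` (countably Hurewicz). -/
def EStarStarOmega (X : Type) [TopologicalSpace X] : Prop :=
  ∀ 𝒰 : ℕ → Set (Set X), (∀ n, IsOpenCover (𝒰 n) ∧ (𝒰 n).Countable) →
    ∃ 𝒱 : ℕ → Set (Set X), (∀ n, (𝒱 n).Finite ∧ 𝒱 n ⊆ 𝒰 n) ∧
      ∀ x : X, ∀ᶠ n in Filter.atTop, x ∈ ⋃₀ 𝒱 n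

theorem stmt (X : Type) [TopologicalSpace X] 
    (ι : Type) (Y : ι → Set X)
    (hcard : Cardinal.mk ι < boundingNumber)
    (hY : ∀ i, MengerSpace (Y i))
    (hcover : ⋃ i, Y i = Set.univ) :
    EStarOmega X := by
  intro 𝒰 h𝒰
  rcases isEmpty_or_nonempty X with hX | hX
  · exact ⟨fun _ => ∅, fun n => ⟨Set.finite_empty, Set.empty_subset _⟩,
      fun x => (IsEmpty.false x).elim⟩
  -- enumerate each countable cover
  have hU : ∀ n, ∃ U : ℕ → Set X, 𝒰 n = Set.range U := by
    intro n
    apply Set.Countable.exists_eq_range (h𝒰 n).2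
    obtain ⟨x⟩ := hX
    have hx : x ∈ ⋃₀ 𝒰 n := by rw [(h𝒰 n).1.2]; trivial
    obtain ⟨u, hu, -⟩ := hx
    exact ⟨u, hu⟩
  choose U hUrange using hU
  -- traces of the covers on the subspaces are open covers
  have hcov : ∀ (i : ι) (n : ℕ),
      IsOpenCover ((fun u => (Subtype.val ⁻¹' u : Set (Y i))) '' 𝒰 n) := by
    intro i n
    constructor
    · rintro v ⟨u, hu, rfl⟩
      exact ((h𝒰 n).1.1 u hu).preimage continuous_subtype_val
    · ext y
      simp only [Set.mem_sUnion, Set.mem_univ, iff_true]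
      have hy : (y : X) ∈ ⋃₀ 𝒰 n := by rw [(h𝒰 n).1.2]; trivial
      obtain ⟨u, hu, hyu⟩ := hy
      exact ⟨Subtype.val ⁻¹' u, ⟨u, hu, rfl⟩, hyu⟩
  -- apply Menger of each Y i to each "column" of covers
  have hM : ∀ (i : ι) (k : ℕ), ∃ 𝒱 : ℕ → Set (Set (Y i)),
      (∀ j, (𝒱 j).Finite ∧
        𝒱 j ⊆ (fun u => (Subtype.val ⁻¹' u : Set (Y i))) '' 𝒰 (Nat.pair k j)) ∧
      ∀ y : (Y i), ∃ j, y ∈ ⋃₀ 𝒱 j := by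
    intro i k
    exact hY i (fun j => (fun u => (Subtype.val ⁻¹' u : Set (Y i))) '' 𝒰 (Nat.pair k j))
      (fun j => hcov i (Nat.pair k j))
  choose 𝒱' h𝒱' using hM
  -- extract bounding functions
  have hf : ∀ (i : ι) (n : ℕ), ∃ b : ℕ,
      ∀ v ∈ 𝒱' i n.unpair.1 n.unpair.2, ∃ m ≤ b,
        v = (Subtype.val ⁻¹' (U n m) : Set (Y i)) := by
    intro i n
    obtain ⟨hfin, hsub⟩ := (h𝒱' i n.unpair.1).1 n.unpair.2
    have hsub' : ∀ v ∈ 𝒱' i n.unpair.1 n.unpair.2, ∃ m,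
        v = (Subtype.val ⁻¹' (U n m) : Set (Y i)) := by
      intro v hv
      obtain ⟨u, hu, rfl⟩ := hsub hv
      rw [Nat.pair_unpair, hUrange n] at hu
      obtain ⟨m, rfl⟩ := hu
      exact ⟨m, rfl⟩
    choose! c hc using hsub'
    obtain ⟨b, hb⟩ := (hfin.image c).bddAbove
    exact ⟨b, fun v hv => ⟨c v, hb ⟨v, hv, rfl⟩, hc v hv⟩⟩
  choose f hfb using hf
  -- fewer than 𝔟 many functions are eventually dominated
  have hg : ∃ g : ℕ → ℕ, ∀ i, EvLE (f i) g := by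
    by_contra hcon
    push_neg at hcon
    have hunb : ¬ ∃ g : ℕ → ℕ, ∀ h ∈ Set.range f, EvLE h g := by
      rintro ⟨g, hgg⟩
      obtain ⟨i, hi⟩ := hcon g
      exact hi (hgg (f i) ⟨i, rfl⟩)
    have h1 : boundingNumber ≤ Cardinal.mk (Set.range f) :=
      csInf_le' ⟨Set.range f, hunb, rfl⟩
    exact absurd hcard (not_lt.2 (h1.trans Cardinal.mk_range_le))
  obtain ⟨g, hg⟩ := hg
  refine ⟨fun n => U n '' Set.Iic (g n), fun n => ⟨(Set.finite_Iic _).image _, ?_⟩, ?_⟩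
  · rintro v ⟨m, -, rfl⟩
    rw [hUrange n]
    exact Set.mem_range_self m
  · intro x
    have hx : x ∈ ⋃ i, Y i := hcover ▸ Set.mem_univ x
    obtain ⟨i, hxi⟩ := Set.mem_iUnion.1 hx
    obtain ⟨N, hN⟩ := Filter.eventually_atTop.1 (hg i)
    obtain ⟨j, v, hv, hxv⟩ := (h𝒱' i N).2 ⟨x, hxi⟩
    have hv' : v ∈ 𝒱' i (Nat.pair N j).unpair.1 (Nat.pair N j).unpair.2 := by
      rw [Nat.unpair_pair]; exact hv
    obtain ⟨m, hm, rfl⟩ := hfb i (Nat.pair N j) v hv'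
    refine ⟨Nat.pair N j, U (Nat.pair N j) m, ⟨m, ?_, rfl⟩, hxv⟩
    exact hm.trans (hN _ (Nat.left_le_pair N j))
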